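/- Let π = σ ∪ ρ with D̄_σ and D̄_ρ both finite. If D̄_σ ∩ D̄_ρ ≠ ∅, or D_σ = ∅, or D_ρ = ∅, then the congruence =_π coincides with the congruence generated by the single-family system {(w_i,w_j) : 1 ≤ i < j ≤ k} where {w_1,…,w_k} = D̄_σ ∪ D̄_ρ; hence every word square-free relative to π has a finite equivalence class. -/

import Mathlib

/-!
Every word of `D̄_σ` is `=_π`-equivalent to every other one (the defining words of a single
family are pairwise related, and `ρ`-rewriting stays inside `=_π`), and likewise for `D̄_ρ`; in
each of the three cases the two closures are linked as well, through a common word or because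
one of them is empty. So `=_π` is generated by identifying all words of `D = D̄_σ ∪ D̄_ρ`.

For such a single-family system, if `w` is square-free relative to it then two occurrences of
words of `D` in a word equivalent to `w` never overlap: otherwise one rewriting step produces a
square. Factor `w = c₀ d₁ c₁ ⋯ d_k c_k` with `d_i ∈ D` and no occurrence of a word of `D` inside
the gaps `c_i`. A rewriting step then only exchanges one `d_i` for another word of `D`, so the
class of `w` lies in the finite set of words `c₀ d'₁ c₁ ⋯ d'_k c_k`. If `ε ∈ D` this breaks down,
but then either `D = {ε}` and classes are singletons, or inserting a nonempty `d ∈ D` twice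
creates the square `d d`.
-/


namespace SqFreePaper

variable {A : Type*}

/-- A word is square-free if it contains no nonempty factor of the form `s ++ s`. -/
def IsSquareFreeWord (w : List A) : Prop :=
  ∀ u s v : List A, w = u ++ s ++ s ++ v → s = []

/-- One-step rewriting relation associated with a system of defining relations `π`. -/
def OneStep (π : List A → List A → Prop) (x y : List A) : Prop :=
  ∃ r s u v : List A, x = r ++ u ++ s ∧ y = r ++ v ++ s ∧ (π u v ∨ π v u)

/-- The congruence `=_π` generated by `π`: reflexive-transitive closure of one-step rewriting. -/
def EqRel (π : List A → List A → Prop) : List A → List A → Prop :=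
  Relation.ReflTransGen (OneStep π)

/-- `w` is square-free relative to `π`: every word in its `=_π`-class is square-free. -/
def SFRel (π : List A → List A → Prop) (w : List A) : Prop :=
  ∀ z, EqRel π w z → IsSquareFreeWord z

/-- Union of two systems of defining relations. -/
def PiRel (σ ρ : List A → List A → Prop) (x y : List A) : Prop := σ x y ∨ ρ x y

/-- The set of defining words of a system `σ`. -/
def DWords (σ : List A → List A → Prop) : Set (List A) :=
  {x | ∃ y, σ x y ∨ σ y x}

/-- The closure of `D_σ` under the congruence `=_ρ`. -/
def ClosureD (σ ρ : List A → List A → Prop) : Set (List A) :=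
  {x | ∃ w ∈ DWords σ, EqRel ρ w x}

/-- The system `{(u_i, u_j) : i < j}` determined by a finite family of words. -/
def FamilyRel {n : ℕ} (u : Fin n → List A) (x y : List A) : Prop :=
  ∃ i j : Fin n, i < j ∧ x = u i ∧ y = u j

/-- `x ~ y` iff both lie in `D̄_σ` or both lie in `D̄_ρ`. -/
def Sim (σ ρ : List A → List A → Prop) (x y : List A) : Prop :=
  (x ∈ ClosureD σ ρ ∧ y ∈ ClosureD σ ρ) ∨ (x ∈ ClosureD ρ σ ∧ y ∈ ClosureD ρ σ)

/-- `D_τ = D̄_σ ∪ D̄_ρ`. -/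
def DTau (σ ρ : List A → List A → Prop) : Set (List A) :=
  ClosureD σ ρ ∪ ClosureD ρ σ

/-- The concatenation `x_a ++ x_{a+1} ++ ⋯ ++ x_{a+len-1}`. -/
def wordSeg (x : ℕ → List A) (a len : ℕ) : List A :=
  ((List.range' a len).map x).flatten

/-- Standing hypotheses of the paper: `D̄_σ`, `D̄_ρ` are finite, nonempty, disjoint,
and closed under `=_σ`, `=_ρ` respectively. -/
def SettingHyps (σ ρ : List A → List A → Prop) : Prop :=
  (ClosureD σ ρ).Finite ∧ (ClosureD ρ σ).Finite ∧
  (ClosureD σ ρ).Nonempty ∧ (ClosureD ρ σ).Nonempty ∧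
  (ClosureD σ ρ ∩ ClosureD ρ σ = ∅) ∧
  (∀ x ∈ ClosureD σ ρ, ∀ y, EqRel σ x y → y ∈ ClosureD σ ρ) ∧
  (∀ x ∈ ClosureD ρ σ, ∀ y, EqRel ρ x y → y ∈ ClosureD ρ σ)

/-- `x_1, …, x_n` (with complementary members `p_i`, `q_i`) is a linear decomposition. -/
def IsLinDecomp (σ ρ : List A → List A → Prop) (n : ℕ) (x p q : ℕ → List A) : Prop :=
  1 ≤ n ∧
  (∀ i, 1 ≤ i → i ≤ n → x i ≠ []) ∧
  (∃ u v : ℕ → List A,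
    (∀ i, 1 < i → i ≤ n → Sim σ ρ (p i ++ x i ++ q i) (q (i-1) ++ u i)) ∧
    (∀ i, 1 ≤ i → i < n → Sim σ ρ (p i ++ x i ++ q i) (v i ++ p (i+1)))) ∧
  (∀ i, 1 ≤ i → i < n → q i = [] ∨ p (i+1) = []) ∧
  p 1 = [] ∧ q n = [] ∧ (n = 1 → x 1 ∈ DTau σ ρ)

/-- `Lin(n)`: words with a linear decomposition of at most `n` members. -/
def LinSet (σ ρ : List A → List A → Prop) (n : ℕ) : Set (List A) :=
  {w | ∃ m, 1 ≤ m ∧ m ≤ n ∧ ∃ x p q, IsLinDecomp σ ρ m x p q ∧ w = wordSeg x 1 m}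

/-- `Lin = ⋃ₙ Lin(n)`: linearly decomposable words. -/
def LinAll (σ ρ : List A → List A → Prop) : Set (List A) :=
  {w | ∃ n, w ∈ LinSet σ ρ n}

/-- Occurrence `(r, d, s)` contains occurrence `(p, e, q)` (of the same word)
iff `|r| ≤ |p|` and `|s| ≤ |q|`. -/
def Contained (p q r s : List A) : Prop := r.length ≤ p.length ∧ s.length ≤ q.length

/-- Two occurrences in `w` overlap iff some occurrence of a nonempty word is
contained in both. -/
def Overlap (w p q r s : List A) : Prop :=
  ∃ a f b : List A, f ≠ [] ∧ w = a ++ f ++ b ∧ Contained a b p q ∧ Contained a b r s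

/-- `(p, e, q)` is a maximal occurrence in `w` of a word `e` in the set `L`. -/
def MaximalOcc (L : Set (List A)) (w p e q : List A) : Prop :=
  w = p ++ e ++ q ∧ e ∈ L ∧
  ∀ r d s, w = r ++ d ++ s → d ∈ L → Contained p q r s → r = p ∧ d = e ∧ s = q

section Congruence

variable {r r' : List A → List A → Prop} {x y : List A}

theorem OneStep.mono (h : r ≤ r') (hxy : OneStep r x y) : OneStep r' x y := by
  obtain ⟨p, q, a, b, rfl, rfl, hab⟩ := hxy
  exact ⟨p, q, a, b, rfl, rfl, hab.imp (h a b) (h b a)⟩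

theorem OneStep.symm (hxy : OneStep r x y) : OneStep r y x := by
  obtain ⟨p, q, a, b, rfl, rfl, hab⟩ := hxy
  exact ⟨p, q, b, a, rfl, rfl, hab.symm⟩

theorem OneStep.append (hxy : OneStep r x y) (p q : List A) :
    OneStep r (p ++ x ++ q) (p ++ y ++ q) := by
  obtain ⟨s, t, a, b, rfl, rfl, hab⟩ := hxy
  exact ⟨p ++ s, t ++ q, a, b, by simp, by simp, hab⟩

theorem EqRel.of_rel (h : r x y) : EqRel r x y :=
  .single ⟨[], [], x, y, by simp, by simp, .inl h⟩

theorem EqRel.mono (h : r ≤ r') (hxy : EqRel r x y) : EqRel r' x y :=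
  Relation.ReflTransGen.mono (fun _ _ => OneStep.mono h) _ _ hxy

theorem EqRel.symm (hxy : EqRel r x y) : EqRel r y x :=
  have : Std.Symm (OneStep r) := ⟨fun _ _ => OneStep.symm⟩
  Std.Symm.symm (r := Relation.ReflTransGen (OneStep r)) _ _ hxy

theorem EqRel.append (hxy : EqRel r x y) (p q : List A) :
    EqRel r (p ++ x ++ q) (p ++ y ++ q) :=
  Relation.ReflTransGen.lift (fun z => p ++ z ++ q) (fun _ _ h => h.append p q) _ _ hxy

theorem SFRel.of_eqRel {w : List A} (hw : SFRel r w) (hwx : EqRel r w x) : SFRel r x :=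
  fun z hz => hw z (hwx.trans hz)

theorem eqRel_iff_of_le_of_le_eqRel (hle : r ≤ r') (hr' : r' ≤ EqRel r) :
    EqRel r x y ↔ EqRel r' x y := by
  refine ⟨EqRel.mono hle, fun h => Relation.reflTransGen_closed ?_ x y h⟩
  rintro _ _ ⟨p, q, a, b, rfl, rfl, hab | hba⟩
  · exact (hr' a b hab).append p q
  · exact (hr' b a hba).symm.append p q

end Congruence

theorem exists_eq_append_of_append_eq_append {p X p' Y : List A} (h : p ++ X = p' ++ Y)
    (hle : p.length ≤ p'.length) : ∃ x, p' = p ++ x ∧ X = x ++ Y := by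
  obtain ⟨x, rfl⟩ := List.prefix_of_prefix_length_le ⟨X, h⟩ ⟨Y, rfl⟩ hle
  exact ⟨x, rfl, List.append_cancel_left (h.trans (List.append_assoc _ _ _))⟩

section SingleFamily

variable {D : Set (List A)}

def SingleFamilyRel (D : Set (List A)) (a b : List A) : Prop := a ∈ D ∧ b ∈ D ∧ a ≠ b

theorem eq_of_eqRel_singleFamilyRel (hD : D.Subsingleton) {w z : List A}
    (h : EqRel (SingleFamilyRel D) w z) : z = w := by
  rcases h.cases_tail with rfl | ⟨_, -, _, _, _, _, -, -, hab | hab⟩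
  · rfl
  all_goals exact absurd (hD hab.1 hab.2.1) hab.2.2

theorem not_sfRel_singleFamilyRel_of_nil_mem (h0 : [] ∈ D) {d : List A} (hd : d ∈ D)
    (hd0 : d ≠ []) (w : List A) : ¬ SFRel (SingleFamilyRel D) w := by
  intro hw
  have insert (v : List A) : OneStep (SingleFamilyRel D) v (v ++ d) :=
    ⟨v, [], [], d, by simp, by simp, .inl ⟨h0, hd, hd0.symm⟩⟩
  exact hd0 (hw _ ((Relation.ReflTransGen.single (insert w)).tail (insert _)) w d [] (by simp))

theorem eqRel_singleFamilyRel_replace {z r f g s : List A} (hz : z = r ++ f ++ s) (hf : f ∈ D)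
    (hg : g ∈ D) : EqRel (SingleFamilyRel D) z (r ++ g ++ s) := by
  subst hz
  by_cases hfg : f = g
  · rw [hfg]; exact .refl
  · exact (EqRel.of_rel ⟨hf, hg, hfg⟩).append r s

theorem SFRel.isSquareFreeWord_replace {z r f g s : List A} (hz : SFRel (SingleFamilyRel D) z)
    (h : z = r ++ f ++ s) (hf : f ∈ D) (hg : g ∈ D) : IsSquareFreeWord (r ++ g ++ s) :=
  hz _ (eqRel_singleFamilyRel_replace h hf hg)

def OccurrencesDisjoint (D : Set (List A)) (z : List A) : Prop :=
  ∀ p f q p' f' q' : List A, z = p ++ f ++ q → z = p' ++ f' ++ q' → f ∈ D → f' ∈ D →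
    p.length + f.length ≤ p'.length ∨ p'.length + f'.length ≤ p.length ∨
      (p = p' ∧ f = f' ∧ q = q')

theorem SFRel.occurrencesDisjoint {z : List A} (hz : SFRel (SingleFamilyRel D) z) :
    OccurrencesDisjoint D z := by
  intro p f q p' f' q' h h' hf hf'
  wlog hle : p.length ≤ p'.length generalizing p f q p' f' q'
  · rcases this p' f' q' p f q h' h hf' hf (by omega) with h | h | ⟨rfl, rfl, rfl⟩
    exacts [.inr (.inl h), .inl h, .inr (.inr ⟨rfl, rfl, rfl⟩)]
  have hpq : p ++ (f ++ q) = p' ++ (f' ++ q') := by simpa using h.symm.trans h'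
  rcases hle.eq_or_lt with hlen | hlt
  · -- Same start: replacing `f` by a longer `f ++ t ∈ D` creates the square `t t`.
    obtain ⟨rfl, hfq⟩ := List.append_inj hpq hlen
    have extension {f t q : List A} (he : z = p ++ f ++ (t ++ q)) (hf : f ∈ D)
        (hft : f ++ t ∈ D) : t = [] :=
      hz.isSquareFreeWord_replace he hf hft (p ++ f) t q (by simp)
    rcases List.append_eq_append_iff.mp hfq with ⟨t, rfl, rfl⟩ | ⟨t, rfl, rfl⟩
    · obtain rfl := extension h hf hf'
      simp
    · obtain rfl := extension h' hf' hf
      simp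
  · -- If `f'` starts at `p ++ x` inside `f = x ++ y`, replacing `f'` by `f` creates `x x`.
    refine or_iff_not_imp_left.mpr fun hfar => absurd ?_ (by omega : p.length ≠ p'.length)
    obtain ⟨x, rfl, hx⟩ := exists_eq_append_of_append_eq_append hpq hle
    obtain ⟨y, rfl, -⟩ := exists_eq_append_of_append_eq_append hx.symm (by simp at hfar; omega)
    have hsq := hz.isSquareFreeWord_replace h' hf' hf p x (y ++ q') (by simp)
    simp [hsq]

theorem OccurrencesDisjoint.of_append_left {a z : List A} (h : OccurrencesDisjoint D (a ++ z)) :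
    OccurrencesDisjoint D z := by
  intro p f q p' f' q' hz hz' hf hf'
  rcases h (a ++ p) f q (a ++ p') f' q' (by simp [hz]) (by simp [hz']) hf hf' with
    h | h | ⟨hp, rfl, rfl⟩
  · exact .inl (by simp at h; omega)
  · exact .inr (.inl (by simp at h; omega))
  · exact .inr (.inr ⟨List.append_cancel_left hp, rfl, rfl⟩)

def FactorFree (D : Set (List A)) (c : List A) : Prop :=
  ∀ α g β : List A, c = α ++ g ++ β → g ∉ D

/-- `Fills D [c₀, …, c_k] z`: `z = c₀ d₁ c₁ ⋯ d_k c_k` for some `d₁, …, d_k ∈ D`. -/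
inductive Fills (D : Set (List A)) : List (List A) → List A → Prop
  | single (c : List A) : Fills D [c] c
  | cons (c d z : List A) (cs : List (List A)) :
      d ∈ D → Fills D cs z → Fills D (c :: cs) (c ++ d ++ z)

theorem finite_setOf_fills (hD : D.Finite) (cs : List (List A)) : {z | Fills D cs z}.Finite := by
  induction cs with
  | nil => exact Set.finite_empty.subset fun z (hz : Fills D [] z) => nomatch hz
  | cons c cs ih =>
    refine ((Set.finite_singleton c).union
      (hD.biUnion fun d _ => ih.image (c ++ d ++ ·))).subset ?_
    rintro _ (_ | ⟨_, d, z, _, hd, hz⟩)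
    · exact .inl rfl
    · exact .inr (Set.mem_biUnion hd ⟨z, hz, rfl⟩)

theorem Fills.replace {cs : List (List A)} {z : List A} (hz : Fills D cs z)
    (hcs : ∀ c ∈ cs, FactorFree D c) (hdisj : OccurrencesDisjoint D z) {p f g q : List A}
    (h : z = p ++ f ++ q) (hf : f ∈ D) (hg : g ∈ D) : Fills D cs (p ++ g ++ q) := by
  induction hz generalizing p q with
  | single c => exact absurd hf (hcs c (by simp) p f q h)
  | cons c d z cs hd hz ih =>
    have h' : p ++ (f ++ q) = c ++ (d ++ z) := by simpa using h.symm
    rcases hdisj p f q c d z h rfl hf hd with hleft | hright | ⟨rfl, rfl, rfl⟩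
    · obtain ⟨x, rfl, hx⟩ := exists_eq_append_of_append_eq_append h' (by omega)
      obtain ⟨γ, rfl, -⟩ := exists_eq_append_of_append_eq_append hx (by simp at hleft; omega)
      exact absurd hf (hcs _ List.mem_cons_self p f γ (by simp))
    · obtain ⟨x, rfl, hx⟩ := exists_eq_append_of_append_eq_append h'.symm (by omega)
      obtain ⟨p₁, rfl, rfl⟩ :=
        exists_eq_append_of_append_eq_append hx (by simp at hright; omega)
      have hz' := ih (fun c hc => hcs c (List.mem_cons_of_mem _ hc))
        (hdisj.of_append_left (a := c ++ d)) (p := p₁) (q := q) (by simp)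
      simpa using Fills.cons c d _ cs hd hz'
    · exact .cons _ g _ cs hg hz

theorem exists_occurrence_factorFree (hD : [] ∉ D) {w : List A}
    (h : ∃ p f q, w = p ++ f ++ q ∧ f ∈ D) :
    ∃ p f q, w = p ++ f ++ q ∧ f ∈ D ∧ FactorFree D p := by
  classical
  have hP : ∃ n, ∃ p f q : List A, p.length = n ∧ w = p ++ f ++ q ∧ f ∈ D := by
    obtain ⟨p, f, q, h⟩ := h
    exact ⟨_, p, f, q, rfl, h⟩
  obtain ⟨p, f, q, hp, hw, hf⟩ := Nat.find_spec hP
  refine ⟨p, f, q, hw, hf, fun α g β hpg hg => Nat.find_min hP ?_ ⟨α, g, β ++ f ++ q, rfl,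
    by simp [hw, hpg], hg⟩⟩
  have hg0 : g ≠ [] := ne_of_mem_of_not_mem hg hD
  have := congrArg List.length hpg
  simp only [List.length_append] at this
  have := List.length_pos_iff.mpr hg0
  omega

theorem exists_fills_factorFree (hD : [] ∉ D) (w : List A) :
    ∃ cs, Fills D cs w ∧ ∀ c ∈ cs, FactorFree D c := by
  by_cases hocc : ∃ p f q, w = p ++ f ++ q ∧ f ∈ D
  · obtain ⟨p, f, q, rfl, hf, hp⟩ := exists_occurrence_factorFree hD hocc
    have : q.length < (p ++ f ++ q).length := by
      have := List.length_pos_iff.mpr (ne_of_mem_of_not_mem hf hD)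
      simp only [List.length_append]
      omega
    obtain ⟨cs, hq, hcs⟩ := exists_fills_factorFree hD q
    exact ⟨p :: cs, .cons p f q cs hf hq, List.forall_mem_cons.mpr ⟨hp, hcs⟩⟩
  · refine ⟨[w], .single w, ?_⟩
    simpa [FactorFree] using fun α g β hw hg => hocc ⟨α, g, β, hw, hg⟩
termination_by w.length

theorem SFRel.finite_setOf_eqRel_singleFamilyRel (hD : D.Finite) {w : List A}
    (hw : SFRel (SingleFamilyRel D) w) : {z | EqRel (SingleFamilyRel D) w z}.Finite := by
  by_cases h0 : [] ∈ D
  · by_cases hsub : D.Subsingleton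
    · exact (Set.finite_singleton w).subset fun z => eq_of_eqRel_singleFamilyRel hsub
    · obtain ⟨d, hd, hd0⟩ := (Set.not_subsingleton_iff.mp hsub).exists_ne []
      exact absurd hw (not_sfRel_singleFamilyRel_of_nil_mem h0 hd hd0 w)
  · obtain ⟨cs, hwcs, hcs⟩ := exists_fills_factorFree h0 w
    refine (finite_setOf_fills hD cs).subset fun z (hz : EqRel _ w z) => ?_
    induction hz with
    | refl => exact hwcs
    | tail hwy hyz ih =>
      obtain ⟨r, s, f, g, rfl, rfl, ⟨hf, hg, -⟩ | ⟨hg, hf, -⟩⟩ := hyz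
      all_goals exact ih.replace hcs (hw.of_eqRel hwy).occurrencesDisjoint rfl hf hg

end SingleFamily

section Families

variable {σ ρ π : List A → List A → Prop} {x y : List A}

theorem FamilyRel.irrefl {n : ℕ} {u : Fin n → List A} (hu : Function.Injective u) (x : List A) :
    ¬ FamilyRel u x x := by
  rintro ⟨i, j, hij, rfl, hj⟩
  exact hij.ne (hu hj)

theorem eqRel_of_mem_dWords_familyRel {n : ℕ} {u : Fin n → List A}
    (hx : x ∈ DWords (FamilyRel u)) (hy : y ∈ DWords (FamilyRel u)) :
    EqRel (FamilyRel u) x y := by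
  have mem_range {z : List A} (hz : z ∈ DWords (FamilyRel u)) : ∃ i, u i = z := by
    obtain ⟨_, ⟨i, _, -, rfl, -⟩ | ⟨_, j, -, -, rfl⟩⟩ := hz
    exacts [⟨i, rfl⟩, ⟨j, rfl⟩]
  obtain ⟨i, rfl⟩ := mem_range hx
  obtain ⟨j, rfl⟩ := mem_range hy
  rcases lt_trichotomy i j with h | rfl | h
  · exact .of_rel ⟨i, j, h, rfl, rfl⟩
  · exact .refl
  · exact (EqRel.of_rel ⟨j, i, h, rfl, rfl⟩).symm

theorem dWords_subset_closureD : DWords σ ⊆ ClosureD σ ρ :=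
  fun w hw => ⟨w, hw, .refl⟩

theorem eqRel_of_mem_closureD (hσ : ∀ x ∈ DWords σ, ∀ y ∈ DWords σ, EqRel σ x y)
    (hσπ : σ ≤ π) (hρπ : ρ ≤ π) (hx : x ∈ ClosureD σ ρ) (hy : y ∈ ClosureD σ ρ) :
    EqRel π x y := by
  obtain ⟨x₀, hx₀, hx₀x⟩ := hx
  obtain ⟨y₀, hy₀, hy₀y⟩ := hy
  exact (hx₀x.mono hρπ).symm.trans
    (((hσ x₀ hx₀ y₀ hy₀).mono hσπ).trans (hy₀y.mono hρπ))

theorem piRel_le_singleFamilyRel_dTau (hσ : ∀ x, ¬ σ x x) (hρ : ∀ x, ¬ ρ x x) :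
    PiRel σ ρ ≤ SingleFamilyRel (DTau σ ρ) := by
  rintro a b (hab | hab)
  · exact ⟨.inl (dWords_subset_closureD ⟨b, .inl hab⟩),
      .inl (dWords_subset_closureD ⟨a, .inr hab⟩), fun h => hσ a (h ▸ hab)⟩
  · exact ⟨.inr (dWords_subset_closureD ⟨b, .inl hab⟩),
      .inr (dWords_subset_closureD ⟨a, .inr hab⟩), fun h => hρ a (h ▸ hab)⟩

theorem eqRel_piRel_of_mem_dTau (hσ : ∀ x ∈ DWords σ, ∀ y ∈ DWords σ, EqRel σ x y)
    (hρ : ∀ x ∈ DWords ρ, ∀ y ∈ DWords ρ, EqRel ρ x y)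
    (hlink : (ClosureD σ ρ ∩ ClosureD ρ σ).Nonempty ∨ DWords σ = ∅ ∨ DWords ρ = ∅)
    (hx : x ∈ DTau σ ρ) (hy : y ∈ DTau σ ρ) : EqRel (PiRel σ ρ) x y := by
  have inl : σ ≤ PiRel σ ρ := fun _ _ => .inl
  have inr : ρ ≤ PiRel σ ρ := fun _ _ => .inr
  have cross {x y} (hx : x ∈ ClosureD σ ρ) (hy : y ∈ ClosureD ρ σ) :
      EqRel (PiRel σ ρ) x y := by
    rcases hlink with ⟨c, hcσ, hcρ⟩ | h0 | h0
    · exact (eqRel_of_mem_closureD hσ inl inr hx hcσ).trans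
        (eqRel_of_mem_closureD hρ inr inl hcρ hy)
    · obtain ⟨_, h, -⟩ := hx
      exact absurd (h0 ▸ h) (Set.notMem_empty _)
    · obtain ⟨_, h, -⟩ := hy
      exact absurd (h0 ▸ h) (Set.notMem_empty _)
  rcases hx with hx | hx <;> rcases hy with hy | hy
  · exact eqRel_of_mem_closureD hσ inl inr hx hy
  · exact cross hx hy
  · exact (cross hy hx).symm
  · exact eqRel_of_mem_closureD hρ inr inl hx hy

end Families

/-- if `D̄_σ ∩ D̄_ρ ≠ ∅`, or `D_σ = ∅`, or `D_ρ = ∅` (with both closures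
finite), then `=_π` coincides with the congruence generated by the single-family system
pairing the elements of `D̄_σ ∪ D̄_ρ`; hence every word square-free relative to `π`
has a finite equivalence class. -/
theorem single_family_case {A : Type*} {nu nv : ℕ}
    (u : Fin nu → List A) (v : Fin nv → List A)
    (hu : Function.Injective u) (hv : Function.Injective v)
    (σ ρ : List A → List A → Prop) (hσ : σ = FamilyRel u) (hρ : ρ = FamilyRel v)
    (hfin1 : (ClosureD σ ρ).Finite) (hfin2 : (ClosureD ρ σ).Finite)
    (hcase : (ClosureD σ ρ ∩ ClosureD ρ σ).Nonempty ∨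
      DWords σ = ∅ ∨ DWords ρ = ∅) :
    (∀ x y : List A, EqRel (PiRel σ ρ) x y ↔
      EqRel (fun a b : List A =>
        a ∈ ClosureD σ ρ ∪ ClosureD ρ σ ∧ b ∈ ClosureD σ ρ ∪ ClosureD ρ σ ∧ a ≠ b) x y) ∧
    (∀ w : List A, SFRel (PiRel σ ρ) w → {z | EqRel (PiRel σ ρ) w z}.Finite) := by
  subst hσ hρ
  have hle := piRel_le_singleFamilyRel_dTau (FamilyRel.irrefl hu) (FamilyRel.irrefl hv)
  have hconn : SingleFamilyRel (DTau (FamilyRel u) (FamilyRel v)) ≤ EqRel (PiRel _ _) :=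
    fun x y hxy => eqRel_piRel_of_mem_dTau (fun _ hx _ hy => eqRel_of_mem_dWords_familyRel hx hy)
      (fun _ hx _ hy => eqRel_of_mem_dWords_familyRel hx hy) hcase hxy.1 hxy.2.1
  have key (x y : List A) := eqRel_iff_of_le_of_le_eqRel (x := x) (y := y) hle hconn
  refine ⟨key, fun w hw => ?_⟩
  have hw' : SFRel (SingleFamilyRel (DTau _ _)) w := fun z hz => hw z ((key w z).2 hz)
  exact (hw'.finite_setOf_eqRel_singleFamilyRel (hfin1.union hfin2)).subset fun z => (key w z).1

end SqFreePaper
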